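/- For every m ≥ 2, the set of tuples x = (x_1, …, x_m) ∈ ℝ^m satisfying conditions (1) and (2) is a closed subset of ℝ^m. -/

import Mathlib

/-- The matrix `A = [[0, 1], [-1, t]]` associated to an edge with cross ratio `t`. -/
noncomputable def crossA (t : ℝ) : Matrix (Fin 2) (Fin 2) ℝ := !![0, 1; -1, t]

/-- The partial product `W_j = A_1 A_2 ⋯ A_j` of the matrices associated to the
cross ratios `x_1, …, x_m` (1-indexed: `crossW m x j` is `W_j`). -/
noncomputable def crossW (m : ℕ) (x : Fin m → ℝ) (j : ℕ) : Matrix (Fin 2) (Fin 2) ℝ :=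
  ((List.ofFn fun i : Fin m => crossA (x i)).take j).prod

/-- Condition (1): `W_m = -I`. -/
def Cond1 (m : ℕ) (x : Fin m → ℝ) : Prop := crossW m x m = -1

/-- Condition (2) (strict sign condition): `a_1 = 0`, `d_{m-1} = 0`,
`a_j < 0` for `2 ≤ j ≤ m-1`, `d_j > 0` for `1 ≤ j ≤ m-2`, and
`b_j > 0`, `c_j < 0` for `1 ≤ j ≤ m-1`. -/
def Cond2 (m : ℕ) (x : Fin m → ℝ) : Prop :=
  crossW m x 1 0 0 = 0 ∧ crossW m x (m - 1) 1 1 = 0 ∧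
  (∀ j, 2 ≤ j → j ≤ m - 1 → crossW m x j 0 0 < 0) ∧
  (∀ j, 1 ≤ j → j ≤ m - 2 → 0 < crossW m x j 1 1) ∧
  (∀ j, 1 ≤ j → j ≤ m - 1 → 0 < crossW m x j 0 1 ∧ crossW m x j 1 0 < 0)

/-- Condition (3) (weak sign condition): as in (2) but with non-strict inequalities. -/
def Cond3 (m : ℕ) (x : Fin m → ℝ) : Prop :=
  crossW m x 1 0 0 = 0 ∧ crossW m x (m - 1) 1 1 = 0 ∧
  (∀ j, 2 ≤ j → j ≤ m - 1 → crossW m x j 0 0 ≤ 0) ∧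
  (∀ j, 1 ≤ j → j ≤ m - 2 → 0 ≤ crossW m x j 1 1) ∧
  (∀ j, 1 ≤ j → j ≤ m - 1 → 0 ≤ crossW m x j 0 1 ∧ crossW m x j 1 0 ≤ 0)

lemma crossW_eq_map (m : ℕ) (x : Fin m → ℝ) (j : ℕ) :
    crossW m x j = (((List.finRange m).take j).map fun i => crossA (x i)).prod := by
  rw [crossW, List.ofFn_eq_map, List.map_take]

lemma continuous_crossW (m j : ℕ) : Continuous fun x : Fin m → ℝ => crossW m x j := by
  simp only [crossW_eq_map]
  apply continuous_list_prod
  intro i _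
  refine continuous_matrix fun k l => ?_
  fin_cases k <;> fin_cases l <;> simp [crossA] <;>
    first
    | exact continuous_const
    | exact continuous_apply i

lemma continuous_crossW_elem (m j : ℕ) (k l : Fin 2) :
    Continuous fun x : Fin m → ℝ => crossW m x j k l :=
  ((continuous_apply l).comp ((continuous_apply k).comp (continuous_crossW m j)))

lemma crossW_succ (m : ℕ) (x : Fin m → ℝ) {j : ℕ} (h : j < m) :
    crossW m x (j+1) = crossW m x j * crossA (x ⟨j, h⟩) := by
  unfold crossW
  rw [List.take_succ, List.prod_append]
  congr 1
  simp [List.getElem?_eq_getElem, h]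

lemma det_crossW (m : ℕ) (x : Fin m → ℝ) (j : ℕ) : (crossW m x j).det = 1 := by
  rw [crossW, ← Matrix.coe_detMonoidHom, MonoidHom.map_list_prod]
  apply List.prod_eq_one
  intro a ha
  simp only [List.mem_map] at ha
  obtain ⟨b, hb, rfl⟩ := ha
  obtain ⟨i, hi⟩ := List.mem_ofFn.mp (List.mem_of_mem_take hb)
  rw [← hi]
  simp [crossA, Matrix.coe_detMonoidHom, Matrix.det_fin_two_of]

lemma crossW_det_entries (m : ℕ) (x : Fin m → ℝ) (j : ℕ) :
    crossW m x j 0 0 * crossW m x j 1 1 - crossW m x j 0 1 * crossW m x j 1 0 = 1 := by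
  rw [← Matrix.det_fin_two]; exact det_crossW m x j

lemma mulA_entry_00 (M : Matrix (Fin 2) (Fin 2) ℝ) (t : ℝ) :
    (M * crossA t) 0 0 = -(M 0 1) := by
  simp [crossA, Matrix.mul_apply, Fin.sum_univ_two]

lemma mulA_entry_10 (M : Matrix (Fin 2) (Fin 2) ℝ) (t : ℝ) :
    (M * crossA t) 1 0 = -(M 1 1) := by
  simp [crossA, Matrix.mul_apply, Fin.sum_univ_two]

/-- Strict positivity/negativity of `b_j`, `c_j` from the weak condition. -/
lemma cond3_bc (m : ℕ) (hm : 2 ≤ m) (x : Fin m → ℝ) (h3 : Cond3 m x) :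
    ∀ j, 1 ≤ j → j ≤ m - 1 → 0 < crossW m x j 0 1 ∧ crossW m x j 1 0 < 0 := by
  obtain ⟨ha1, hd1, ha, hdpos, hbc⟩ := h3
  intro j hj1 hjm
  have hdet := crossW_det_entries m x j
  have had : crossW m x j 0 0 * crossW m x j 1 1 ≤ 0 := by
    by_cases h1 : j = 1
    · rw [h1, ha1]; simp
    · by_cases h2 : j = m - 1
      · rw [h2, hd1]; simp
      · exact mul_nonpos_of_nonpos_of_nonneg (ha j (by omega) (by omega))
          (hdpos j (by omega) (by omega))
  obtain ⟨hb, hc⟩ := hbc j hj1 hjm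
  constructor
  · rcases hb.lt_or_eq with h | h
    · exact h
    · exfalso; rw [← h] at hdet; nlinarith
  · rcases hc.lt_or_eq with h | h
    · exact h
    · exfalso; rw [h] at hdet; nlinarith

lemma cond3_to_cond2 (m : ℕ) (hm : 2 ≤ m) (x : Fin m → ℝ) (h3 : Cond3 m x) : Cond2 m x := by
  have hbc := cond3_bc m hm x h3
  obtain ⟨ha1, hd1, -, -, -⟩ := h3
  refine ⟨ha1, hd1, ?_, ?_, hbc⟩
  · intro j hj2 hjm
    obtain ⟨k, rfl⟩ : ∃ k, j = k + 1 := ⟨j - 1, by omega⟩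
    have hk : k < m := by omega
    rw [crossW_succ m x hk, mulA_entry_00]
    have := (hbc k (by omega) (by omega)).1
    linarith
  · intro j hj1 hjm
    have hk : j < m := by omega
    have h10 := mulA_entry_10 (crossW m x j) (x ⟨j, hk⟩)
    rw [← crossW_succ m x hk] at h10
    have := (hbc (j + 1) (by omega) (by omega)).2
    rw [h10] at this
    linarith

lemma cond2_to_cond3 (m : ℕ) (x : Fin m → ℝ) (h2 : Cond2 m x) : Cond3 m x := by
  obtain ⟨ha1, hd1, ha, hd, hbc⟩ := h2
  exact ⟨ha1, hd1, fun j h1 h2 => (ha j h1 h2).le, fun j h1 h2 => (hd j h1 h2).le,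
    fun j h1 h2 => ⟨(hbc j h1 h2).1.le, (hbc j h1 h2).2.le⟩⟩

lemma isClosed_cond3 (m : ℕ) : IsClosed {x : Fin m → ℝ | Cond3 m x} := by
  have h1 : IsClosed {x : Fin m → ℝ | crossW m x 1 0 0 = 0} :=
    isClosed_eq (continuous_crossW_elem m 1 0 0) continuous_const
  have h2 : IsClosed {x : Fin m → ℝ | crossW m x (m - 1) 1 1 = 0} :=
    isClosed_eq (continuous_crossW_elem m (m - 1) 1 1) continuous_const
  have h3 : IsClosed {x : Fin m → ℝ | ∀ j, 2 ≤ j → j ≤ m - 1 → crossW m x j 0 0 ≤ 0} := by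
    have : {x : Fin m → ℝ | ∀ j, 2 ≤ j → j ≤ m - 1 → crossW m x j 0 0 ≤ 0}
        = ⋂ (j : ℕ) (_ : 2 ≤ j) (_ : j ≤ m - 1), {x : Fin m → ℝ | crossW m x j 0 0 ≤ 0} := by
      ext x; simp
    rw [this]
    exact isClosed_iInter fun j => isClosed_iInter fun _ => isClosed_iInter fun _ =>
      isClosed_le (continuous_crossW_elem m j 0 0) continuous_const
  have h4 : IsClosed {x : Fin m → ℝ | ∀ j, 1 ≤ j → j ≤ m - 2 → 0 ≤ crossW m x j 1 1} := by
    have : {x : Fin m → ℝ | ∀ j, 1 ≤ j → j ≤ m - 2 → 0 ≤ crossW m x j 1 1}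
        = ⋂ (j : ℕ) (_ : 1 ≤ j) (_ : j ≤ m - 2), {x : Fin m → ℝ | 0 ≤ crossW m x j 1 1} := by
      ext x; simp
    rw [this]
    exact isClosed_iInter fun j => isClosed_iInter fun _ => isClosed_iInter fun _ =>
      isClosed_le continuous_const (continuous_crossW_elem m j 1 1)
  have h5 : IsClosed {x : Fin m → ℝ | ∀ j, 1 ≤ j → j ≤ m - 1 →
      0 ≤ crossW m x j 0 1 ∧ crossW m x j 1 0 ≤ 0} := by
    have : {x : Fin m → ℝ | ∀ j, 1 ≤ j → j ≤ m - 1 →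
        0 ≤ crossW m x j 0 1 ∧ crossW m x j 1 0 ≤ 0}
        = ⋂ (j : ℕ) (_ : 1 ≤ j) (_ : j ≤ m - 1),
          ({x : Fin m → ℝ | 0 ≤ crossW m x j 0 1} ∩ {x : Fin m → ℝ | crossW m x j 1 0 ≤ 0}) := by
      ext x; simp [Set.mem_iInter, forall_and]
    rw [this]
    exact isClosed_iInter fun j => isClosed_iInter fun _ => isClosed_iInter fun _ =>
      IsClosed.inter (isClosed_le continuous_const (continuous_crossW_elem m j 0 1))
        (isClosed_le (continuous_crossW_elem m j 1 0) continuous_const)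
  have : {x : Fin m → ℝ | Cond3 m x} =
      {x : Fin m → ℝ | crossW m x 1 0 0 = 0} ∩ {x : Fin m → ℝ | crossW m x (m - 1) 1 1 = 0} ∩
      {x : Fin m → ℝ | ∀ j, 2 ≤ j → j ≤ m - 1 → crossW m x j 0 0 ≤ 0} ∩
      {x : Fin m → ℝ | ∀ j, 1 ≤ j → j ≤ m - 2 → 0 ≤ crossW m x j 1 1} ∩
      {x : Fin m → ℝ | ∀ j, 1 ≤ j → j ≤ m - 1 →
        0 ≤ crossW m x j 0 1 ∧ crossW m x j 1 0 ≤ 0} := by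
    ext x
    simp only [Cond3, Set.mem_setOf_eq, Set.mem_inter_iff]
    tauto
  rw [this]
  exact ((((h1.inter h2).inter h3).inter h4).inter h5)

/-- The per-vertex content of Lemma 3.2: for every `m ≥ 2`, the set of tuples in `ℝ^m`
satisfying conditions (1) and (2) is closed. -/
theorem cond_solution_set_isClosed (m : ℕ) (hm : 2 ≤ m) :
    IsClosed {x : Fin m → ℝ | Cond1 m x ∧ Cond2 m x} := by
  have key : {x : Fin m → ℝ | Cond1 m x ∧ Cond2 m x} = {x : Fin m → ℝ | Cond1 m x ∧ Cond3 m x} := by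
    ext x
    simp only [Set.mem_setOf_eq]
    exact ⟨fun ⟨h1, h2⟩ => ⟨h1, cond2_to_cond3 m x h2⟩,
      fun ⟨h1, h3⟩ => ⟨h1, cond3_to_cond2 m hm x h3⟩⟩
  rw [key]
  have hC1 : IsClosed {x : Fin m → ℝ | Cond1 m x} :=
    isClosed_eq (continuous_crossW m m) continuous_const
  have : {x : Fin m → ℝ | Cond1 m x ∧ Cond3 m x} =
      {x : Fin m → ℝ | Cond1 m x} ∩ {x : Fin m → ℝ | Cond3 m x} := rfl
  rw [this]
  exact hC1.inter (isClosed_cond3 m)
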